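/- The shaping correction term in the EPIC canonicalization arising from a potential-shaped reward telescopes: for the shaped reward R'(s,a,s') = R(s,a,s') + γΦ(s') − Φ(s), the difference C(R')(s,a,s') − C(R)(s,a,s') equals (γΦ(s') − Φ(s)) − E[γΦ(S') − Φ(s)] + E[γ²Φ(S') − γΦ(s')] − E[γ²Φ(S') − γΦ(S)] where S, S' are independent with law D_S, and this difference equals zero. -/

import Mathlib

/-!
For bounded measurable rewards the iterated integrals in `epicC` are integrals over product
measures (Fubini), so `epicC` is additive and `C(R') - C(R) = C(G)` for the shaping term
`G(s, a, s') = γ Φ(s') - Φ(s)`. Since `G` ignores the action, `C(G)` is literally the correction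
term, and writing `E = E[Φ(S)]` every expectation in it is affine in `E`:
`(γΦ(s') - Φ(s)) - (γE - Φ(s)) + (γ²E - γΦ(s')) - (γ²E - γE) = 0`.
-/

open MeasureTheory

/-- The EPIC canonicalization of a reward function. -/
noncomputable def epicC {S A : Type*} [MeasurableSpace S] [MeasurableSpace A]
    (μS : Measure S) (μA : Measure A) (γ : ℝ) (R : S → A → S → ℝ) : S → A → S → ℝ :=
  fun s _a s' =>
    R s _a s' + (∫ a', (∫ x', γ * R s' a' x' ∂μS) ∂μA)
      - (∫ a', (∫ x', R s a' x' ∂μS) ∂μA)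
      - γ * (∫ x, (∫ a', (∫ x', R x a' x' ∂μS) ∂μA) ∂μS)

/-- The shaping correction term arising in the EPIC canonicalization of a
potential-shaped reward:
(γΦ(s') − Φ(s)) − E[γΦ(S') − Φ(s)] + E[γ²Φ(S') − γΦ(s')] − E[γ²Φ(S') − γΦ(S)],
with S, S' independent with law μS. -/
noncomputable def shapingCorrection {S : Type*} [MeasurableSpace S]
    (μS : Measure S) (γ : ℝ) (Φ : S → ℝ) (s s' : S) : ℝ :=
  (γ * Φ s' - Φ s) - (∫ x', (γ * Φ x' - Φ s) ∂μS)
    + (∫ x', (γ ^ 2 * Φ x' - γ * Φ s') ∂μS)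
    - (∫ x, (∫ x', (γ ^ 2 * Φ x' - γ * Φ x) ∂μS) ∂μS)

theorem integrable_comp_of_abs_le {X Y : Type*} [MeasurableSpace X] [MeasurableSpace Y]
    {ν : Measure X} [IsFiniteMeasure ν] {f : Y → ℝ} (hf : Measurable f)
    (hb : ∃ M, ∀ y, |f y| ≤ M) {g : X → Y} (hg : Measurable g) : Integrable (f ∘ g) ν :=
  let ⟨M, hM⟩ := hb
  .of_bound (hf.comp hg).aestronglyMeasurable M (ae_of_all _ fun x => hM (g x))

def potentialShaping {S A : Type*} (γ : ℝ) (Φ : S → ℝ) : S → A → S → ℝ :=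
  fun s _ s' => γ * Φ s' - Φ s

section EpicCanonicalization

variable {S A : Type*} [MeasurableSpace S] [MeasurableSpace A] {μS : Measure S} {μA : Measure A}

section FiniteMeasure

variable [IsFiniteMeasure μS] [IsFiniteMeasure μA] {R : S → A → S → ℝ}

theorem integrable_uncurry_reward
    (hRm : Measurable fun p : S × A × S => R p.1 p.2.1 p.2.2)
    (hRb : ∃ M, ∀ s a s', |R s a s'| ≤ M) :
    Integrable (fun q : S × A × S => R q.1 q.2.1 q.2.2) (μS.prod (μA.prod μS)) :=
  integrable_comp_of_abs_le hRm (hRb.imp fun _ hM _ => hM _ _ _) measurable_id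

theorem integrable_uncurry_reward_slice
    (hRm : Measurable fun p : S × A × S => R p.1 p.2.1 p.2.2)
    (hRb : ∃ M, ∀ s a s', |R s a s'| ≤ M) (s : S) :
    Integrable (fun p : A × S => R s p.1 p.2) (μA.prod μS) :=
  integrable_comp_of_abs_le hRm (hRb.imp fun _ hM _ => hM _ _ _)
    (g := fun p : A × S => (s, p)) (by fun_prop)

theorem epicC_eq_integral_prod
    (hRm : Measurable fun p : S × A × S => R p.1 p.2.1 p.2.2)
    (hRb : ∃ M, ∀ s a s', |R s a s'| ≤ M) (γ : ℝ) (s : S) (a : A) (s' : S) :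
    epicC μS μA γ R s a s' = R s a s' + γ * ∫ p, R s' p.1 p.2 ∂(μA.prod μS)
      - ∫ p, R s p.1 p.2 ∂(μA.prod μS)
      - γ * ∫ q, R q.1 q.2.1 q.2.2 ∂(μS.prod (μA.prod μS)) := by
  have hslice := integrable_uncurry_reward_slice hRm hRb (μS := μS) (μA := μA)
  simp only [epicC, integral_const_mul]
  rw [integral_prod _ (integrable_uncurry_reward hRm hRb), integral_prod _ (hslice s),
    integral_prod _ (hslice s')]
  simp only [fun x => integral_prod _ (hslice x)]

theorem epicC_add {G : S → A → S → ℝ}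
    (hRm : Measurable fun p : S × A × S => R p.1 p.2.1 p.2.2)
    (hRb : ∃ M, ∀ s a s', |R s a s'| ≤ M)
    (hGm : Measurable fun p : S × A × S => G p.1 p.2.1 p.2.2)
    (hGb : ∃ M, ∀ s a s', |G s a s'| ≤ M) (γ : ℝ) :
    epicC μS μA γ (R + G) = epicC μS μA γ R + epicC μS μA γ G := by
  have hSumb : ∃ M, ∀ s a s', |(R + G) s a s'| ≤ M := by
    obtain ⟨MR, hMR⟩ := hRb
    obtain ⟨MG, hMG⟩ := hGb
    exact ⟨MR + MG, fun s a s' =>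
      (abs_add_le _ _).trans (add_le_add (hMR s a s') (hMG s a s'))⟩
  funext s a s'
  change epicC μS μA γ (R + G) s a s' = epicC μS μA γ R s a s' + epicC μS μA γ G s a s'
  have hslice_add (s : S) :=
    integral_add (integrable_uncurry_reward_slice hRm hRb (μS := μS) (μA := μA) s)
      (integrable_uncurry_reward_slice hGm hGb s)
  rw [epicC_eq_integral_prod (hRm.add hGm) hSumb, epicC_eq_integral_prod hRm hRb,
    epicC_eq_integral_prod hGm hGb]
  simp only [Pi.add_apply]
  rw [integral_add (integrable_uncurry_reward hRm hRb) (integrable_uncurry_reward hGm hGb),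
    hslice_add, hslice_add]
  ring

end FiniteMeasure

theorem epicC_potentialShaping [IsProbabilityMeasure μA] (γ : ℝ) (Φ : S → ℝ)
    (s : S) (a : A) (s' : S) :
    epicC μS μA γ (potentialShaping γ Φ) s a s' = shapingCorrection μS γ Φ s s' := by
  simp only [epicC, shapingCorrection, potentialShaping, integral_const, probReal_univ, one_smul,
    ← integral_const_mul]
  ring_nf

theorem shapingCorrection_eq_zero [IsProbabilityMeasure μS] {Φ : S → ℝ} (hΦ : Integrable Φ μS)
    (γ : ℝ) (s s' : S) : shapingCorrection μS γ Φ s s' = 0 := by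
  have hlin (b c : ℝ) : ∫ x, (b * Φ x - c) ∂μS = b * ∫ x, Φ x ∂μS - c := by
    rw [integral_sub (hΦ.const_mul b) (integrable_const c), integral_const_mul, integral_const,
      probReal_univ, one_smul]
  simp only [shapingCorrection, hlin]
  rw [integral_sub (integrable_const _) (hΦ.const_mul γ), integral_const, integral_const_mul,
    probReal_univ, one_smul]
  ring

theorem epicC_add_potentialShaping [IsFiniteMeasure μS] [IsProbabilityMeasure μA]
    {R : S → A → S → ℝ} (hRm : Measurable fun p : S × A × S => R p.1 p.2.1 p.2.2)
    (hRb : ∃ M, ∀ s a s', |R s a s'| ≤ M) (γ : ℝ) {Φ : S → ℝ}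
    (hΦm : Measurable Φ) (hΦb : ∃ M, ∀ s, |Φ s| ≤ M) (s : S) (a : A) (s' : S) :
    epicC μS μA γ (R + potentialShaping γ Φ) s a s'
      = epicC μS μA γ R s a s' + shapingCorrection μS γ Φ s s' := by
  have hGm : Measurable fun p : S × A × S => potentialShaping γ Φ p.1 p.2.1 p.2.2 := by
    unfold potentialShaping; fun_prop
  have hGb : ∃ M, ∀ s a s', |potentialShaping (A := A) γ Φ s a s'| ≤ M := by
    obtain ⟨M, hM⟩ := hΦb
    refine ⟨|γ| * M + M, fun s _ s' => (abs_sub _ _).trans (add_le_add ?_ (hM s))⟩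
    rw [abs_mul]
    exact mul_le_mul_of_nonneg_left (hM s') (abs_nonneg γ)
  rw [epicC_add hRm hRb hGm hGb, Pi.add_apply, Pi.add_apply, Pi.add_apply,
    epicC_potentialShaping]

end EpicCanonicalization

theorem epic_shaping_correction_telescopes_general {S A : Type*}
    [MeasurableSpace S] [MeasurableSpace A]
    (μS : Measure S) (μA : Measure A)
    [IsProbabilityMeasure μS] [IsProbabilityMeasure μA]
    (γ : ℝ)
    (R : S → A → S → ℝ)
    (hRm : Measurable fun p : S × A × S => R p.1 p.2.1 p.2.2)
    (hRb : ∃ M, ∀ s a s', |R s a s'| ≤ M)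
    (Φ : S → ℝ) (hΦm : Measurable Φ) (hΦb : ∃ M, ∀ s, |Φ s| ≤ M)
    (R' : S → A → S → ℝ)
    (hR' : ∀ s a s', R' s a s' = R s a s' + γ * Φ s' - Φ s) :
    (∀ s a s', epicC μS μA γ R' s a s' - epicC μS μA γ R s a s'
        = shapingCorrection μS γ Φ s s') ∧
      (∀ s s', shapingCorrection μS γ Φ s s' = 0) := by
  have hR'_eq : R' = R + potentialShaping γ Φ := by
    funext s a s'
    rw [hR', Pi.add_apply, Pi.add_apply, Pi.add_apply, potentialShaping, add_sub_assoc]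
  have hΦ : Integrable Φ μS := integrable_comp_of_abs_le hΦm hΦb measurable_id
  refine ⟨fun s a s' => ?_, shapingCorrection_eq_zero hΦ γ⟩
  rw [hR'_eq, epicC_add_potentialShaping hRm hRb γ hΦm hΦb, add_sub_cancel_left]

/-- For the shaped reward R'(s,a,s') = R(s,a,s') + γΦ(s') − Φ(s), the
difference C(R') − C(R) equals the shaping correction term, and this term telescopes
to zero. -/
theorem epic_shaping_correction_telescopes {S A : Type*}
    [MeasurableSpace S] [MeasurableSpace A]
    (μS : Measure S) (μA : Measure A)
    [IsProbabilityMeasure μS] [IsProbabilityMeasure μA]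
    (γ : ℝ) (hγ : γ ∈ Set.Icc (0 : ℝ) 1)
    (R : S → A → S → ℝ)
    (hRm : Measurable fun p : S × A × S => R p.1 p.2.1 p.2.2)
    (hRb : ∃ M, ∀ s a s', |R s a s'| ≤ M)
    (Φ : S → ℝ) (hΦm : Measurable Φ) (hΦb : ∃ M, ∀ s, |Φ s| ≤ M)
    (R' : S → A → S → ℝ)
    (hR' : ∀ s a s', R' s a s' = R s a s' + γ * Φ s' - Φ s) :
    (∀ s a s', epicC μS μA γ R' s a s' - epicC μS μA γ R s a s'
        = shapingCorrection μS γ Φ s s') ∧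
      (∀ s s', shapingCorrection μS γ Φ s s' = 0) :=
  epic_shaping_correction_telescopes_general μS μA γ R hRm hRb Φ hΦm hΦb R' hR'
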